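/- If F is the uniform distribution on [0,1], then for every positive integer m, sup_{x ∈ [0,1]} |F^{(m)}(x) − F(x)| = 1/(m+1); that is, the lower bound rate O(1/(m+1)) for the Kolmogorov–Smirnov deviation of the binomial mixture CDF is attained by the uniform distribution. -/

import Mathlib

/-!
For `ν ≤ n` the Bernstein polynomial `b_{n,ν}` integrates to `1 / (n + 1)` over `[0, 1]`:
consecutive integrals agree because `b_{n,ν} - b_{n,ν+1}` is a multiple of the derivative of
`b_{n+1,ν+1}`, which vanishes at `0` and `1`, and the `n + 1` integrals sum to `1`. Hence the
uniform mixture of `Binomial(m, s) / m` is the uniform law on `{0, 1/m, …, 1}`, whose CDF at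
`x ∈ [0, 1]` is `(⌊m x⌋ + 1) / (m + 1)`. This lies within `1 / (m + 1)` of `x`, with equality
at `x = 0`.
-/

open MeasureTheory ProbabilityTheory Real

noncomputable section

/-- pmf of Binomial(m, s) at k. -/
def binomPMFr (m k : ℕ) (s : ℝ) : ℝ := (m.choose k : ℝ) * s ^ k * (1 - s) ^ (m - k)

/-- Law of ŝ = X/m where X ~ Binomial(m, s). -/
def binomLaw (m : ℕ) (s : ℝ) : Measure ℝ :=
  ∑ k ∈ Finset.range (m + 1), ENNReal.ofReal (binomPMFr m k s) • Measure.dirac ((k : ℝ) / m)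

/-- Binomial-mixture law of ŝ where s ~ μ. -/
def mixLaw (μ : Measure ℝ) (m : ℕ) : Measure ℝ := μ.bind (binomLaw m)

/-- CDF of a measure. -/
def cdfOf (μ : Measure ℝ) (x : ℝ) : ℝ := (μ (Set.Iic x)).toReal

/-- The uniform distribution on `[0,1]`. -/
def unif : Measure ℝ := volume.restrict (Set.Icc (0:ℝ) 1)

open Finset

namespace bernsteinPolynomial

theorem integral_eval_succ_eq (n ν : ℕ) (hν : ν < n) :
    ∫ x in (0:ℝ)..1, (bernsteinPolynomial ℝ n (ν + 1)).eval x
      = ∫ x in (0:ℝ)..1, (bernsteinPolynomial ℝ n ν).eval x := by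
  set p := bernsteinPolynomial ℝ (n + 1) (ν + 1)
  have hFTC := intervalIntegral.integral_eq_sub_of_hasDerivAt (a := 0) (b := 1)
    (fun x _ => p.hasDerivAt x) (p.derivative.continuous.intervalIntegrable _ _)
  have hp0 : p.eval 0 = 0 := by simp [p, eval_at_0]
  have hp1 : p.eval 1 = 0 := by simp [p, eval_at_1]; omega
  simp only [p, derivative_succ, Polynomial.eval_mul, Polynomial.eval_sub, Polynomial.eval_natCast,
    intervalIntegral.integral_const_mul, hp0, hp1, Nat.add_sub_cancel, sub_self] at hFTC
  rw [intervalIntegral.integral_sub ((Polynomial.continuous _).intervalIntegrable _ _)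
    ((Polynomial.continuous _).intervalIntegrable _ _)] at hFTC
  linarith [(mul_eq_zero.mp hFTC).resolve_left (by positivity)]

theorem integral_eval_eq_integral_eval_zero (n : ℕ) : ∀ ν ≤ n,
    ∫ x in (0:ℝ)..1, (bernsteinPolynomial ℝ n ν).eval x
      = ∫ x in (0:ℝ)..1, (bernsteinPolynomial ℝ n 0).eval x
  | 0, _ => rfl
  | ν + 1, hν =>
    (integral_eval_succ_eq n ν hν).trans
      (integral_eval_eq_integral_eval_zero n ν (Nat.le_of_succ_le hν))

theorem integral_eval (n ν : ℕ) (hν : ν ≤ n) :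
    ∫ x in (0:ℝ)..1, (bernsteinPolynomial ℝ n ν).eval x = 1 / (n + 1) := by
  have hsum : ∑ k ∈ range (n + 1), ∫ x in (0:ℝ)..1, (bernsteinPolynomial ℝ n k).eval x
      = 1 := by
    rw [← intervalIntegral.integral_finsetSum
      (fun k _ => (Polynomial.continuous _).intervalIntegrable _ _)]
    simp [← Polynomial.eval_finsetSum, sum]
  rw [Finset.sum_congr rfl fun k hk =>
    integral_eval_eq_integral_eval_zero n k (Nat.lt_succ_iff.mp (mem_range.mp hk))] at hsum
  rw [integral_eval_eq_integral_eval_zero n ν hν, eq_div_iff (by positivity)]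
  simpa [mul_comm] using hsum

end bernsteinPolynomial

theorem binomPMFr_eq_eval (m k : ℕ) (s : ℝ) :
    binomPMFr m k s = (bernsteinPolynomial ℝ m k).eval s := by
  simp [binomPMFr, bernsteinPolynomial]

theorem continuous_binomPMFr (m k : ℕ) : Continuous (binomPMFr m k) := by
  unfold binomPMFr
  fun_prop

theorem binomPMFr_nonneg (m k : ℕ) {s : ℝ} (hs : s ∈ Set.Icc (0:ℝ) 1) : 0 ≤ binomPMFr m k s := by
  obtain ⟨hs0, hs1⟩ := hs
  have : 0 ≤ 1 - s := sub_nonneg.mpr hs1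
  unfold binomPMFr
  positivity

theorem lintegral_binomPMFr_unif (m k : ℕ) (hk : k ≤ m) :
    ∫⁻ s, ENNReal.ofReal (binomPMFr m k s) ∂unif = ENNReal.ofReal (1 / (m + 1)) := by
  rw [unif, ← ofReal_integral_eq_lintegral_ofReal (continuous_binomPMFr m k).integrableOn_Icc
    (ae_restrict_of_forall_mem measurableSet_Icc fun s hs => binomPMFr_nonneg m k hs),
    integral_Icc_eq_integral_Ioc, ← intervalIntegral.integral_of_le zero_le_one]
  simp only [binomPMFr_eq_eval, bernsteinPolynomial.integral_eval m k hk]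

theorem MeasureTheory.Measure.bind_finsetSum_smul {α β ι : Type*} [MeasurableSpace α]
    [MeasurableSpace β]
    (μ : Measure α) (s : Finset ι) (f : ι → α → ENNReal) (hf : ∀ i ∈ s, Measurable (f i))
    (ν : ι → Measure β) :
    μ.bind (fun a => ∑ i ∈ s, f i a • ν i) = ∑ i ∈ s, (∫⁻ a, f i a ∂μ) • ν i := by
  have hκ : Measurable fun a => ∑ i ∈ s, f i a • ν i := by
    refine Measure.measurable_of_measurable_coe _ fun t _ => ?_
    simp only [Measure.finsetSum_apply, Measure.smul_apply, smul_eq_mul]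
    exact Finset.measurable_sum _ fun i hi => (hf i hi).mul_const _
  ext t ht
  simp only [Measure.bind_apply ht hκ.aemeasurable, Measure.finsetSum_apply,
    Measure.smul_apply, smul_eq_mul]
  rw [lintegral_finsetSum _ fun i hi => (hf i hi).mul_const _]
  exact Finset.sum_congr rfl fun i hi => lintegral_mul_const _ (hf i hi)

theorem mixLaw_unif (m : ℕ) :
    mixLaw unif m = ∑ k ∈ range (m + 1),
      ENNReal.ofReal (1 / (m + 1)) • Measure.dirac ((k : ℝ) / m) := by
  unfold mixLaw binomLaw
  rw [Measure.bind_finsetSum_smul _ _ _ fun k _ =>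
    (continuous_binomPMFr m k).measurable.ennreal_ofReal]
  refine Finset.sum_congr rfl fun k hk => ?_
  rw [lintegral_binomPMFr_unif m k (Nat.lt_succ_iff.mp (mem_range.mp hk))]

theorem cdfOf_finsetSum_smul_dirac {ι : Type*} (s : Finset ι) (c : ENNReal) (a : ι → ℝ) (x : ℝ) :
    cdfOf (∑ i ∈ s, c • Measure.dirac (a i)) x = #{i ∈ s | a i ≤ x} * c.toReal := by
  simp only [cdfOf, Measure.finsetSum_apply, Measure.smul_apply, smul_eq_mul,
    Measure.dirac_apply' _ measurableSet_Iic, Set.indicator, Set.mem_Iic, Pi.one_apply, mul_ite,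
    mul_one, mul_zero, ← sum_filter, sum_const, nsmul_eq_mul, ENNReal.toReal_mul,
    ENNReal.toReal_natCast]

theorem card_filter_natCast_div_le (m : ℕ) (hm : 1 ≤ m) {x : ℝ} (hx : x ∈ Set.Icc (0:ℝ) 1) :
    #{k ∈ range (m + 1) | ((k : ℕ) : ℝ) / m ≤ x} = ⌊m * x⌋₊ + 1 := by
  have hm0 : (0 : ℝ) < m := by exact_mod_cast hm
  have hfloor : ⌊m * x⌋₊ ≤ m := Nat.floor_le_of_le (mul_le_of_le_one_right hm0.le hx.2)
  suffices {k ∈ range (m + 1) | ((k : ℕ) : ℝ) / m ≤ x} = range (⌊m * x⌋₊ + 1) by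
    rw [this, card_range]
  ext k
  simp only [mem_filter, mem_range, Nat.lt_succ_iff, div_le_iff₀ hm0, mul_comm x,
    ← Nat.le_floor_iff (mul_nonneg hm0.le hx.1)]
  constructor
  · exact And.right
  · exact fun hk => ⟨hk.trans hfloor, hk⟩

theorem cdfOf_mixLaw_unif (m : ℕ) (hm : 1 ≤ m) {x : ℝ} (hx : x ∈ Set.Icc (0:ℝ) 1) :
    cdfOf (mixLaw unif m) x = (⌊m * x⌋₊ + 1) / (m + 1) := by
  rw [mixLaw_unif, cdfOf_finsetSum_smul_dirac, card_filter_natCast_div_le m hm hx,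
    ENNReal.toReal_ofReal (by positivity)]
  push_cast
  ring

theorem cdfOf_unif {x : ℝ} (hx : x ∈ Set.Icc (0:ℝ) 1) : cdfOf unif x = x := by
  have hinter : Set.Iic x ∩ Set.Icc 0 1 = Set.Icc 0 x :=
    Set.ext fun y => ⟨fun h => ⟨h.2.1, h.1⟩, fun h => ⟨h.2, h.1, h.2.trans hx.2⟩⟩
  rw [cdfOf, unif, Measure.restrict_apply measurableSet_Iic, hinter, Real.volume_Icc,
    ENNReal.toReal_ofReal (by linarith [hx.1]), sub_zero]

theorem abs_floor_add_one_div_sub_le (m : ℕ) {x : ℝ} (hx : x ∈ Set.Icc (0:ℝ) 1) :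
    |(⌊m * x⌋₊ + 1) / (m + 1) - x| ≤ 1 / (m + 1) := by
  have hlo : (⌊m * x⌋₊ : ℝ) ≤ m * x := Nat.floor_le (mul_nonneg m.cast_nonneg hx.1)
  have hhi : m * x < ⌊m * x⌋₊ + 1 := Nat.lt_floor_add_one _
  have hpos : (0 : ℝ) < m + 1 := by positivity
  rw [div_sub' hpos.ne', abs_div, abs_of_pos hpos, div_le_div_iff_of_pos_right hpos, abs_le]
  constructor <;> nlinarith [hx.1, hx.2]

/-- If `F` is uniform on `[0,1]`, then for every positive integer `m`,
`sup_{x ∈ [0,1]} |F^{(m)}(x) − F(x)| = 1/(m+1)`; i.e. the lower bound rate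
`O(1/(m+1))` for the K–S deviation of the binomial mixture CDF is attained. -/
theorem stmt4 (m : ℕ) (hm : 1 ≤ m) :
    (⨆ x : Set.Icc (0:ℝ) 1, |cdfOf (mixLaw unif m) x - cdfOf unif x|)
      = 1 / (m + 1) := by
  have hdev (x : Set.Icc (0:ℝ) 1) : |cdfOf (mixLaw unif m) x - cdfOf unif x|
      = |((⌊(m : ℝ) * x⌋₊ : ℝ) + 1) / ((m : ℝ) + 1) - x| := by
    rw [cdfOf_mixLaw_unif m hm x.2, cdfOf_unif x.2]
  refine ciSup_eq_of_forall_le_of_forall_lt_exists_gt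
    (fun x => (hdev x).trans_le (abs_floor_add_one_div_sub_le m x.2)) fun w hw => ?_
  refine ⟨⟨0, Set.left_mem_Icc.mpr zero_le_one⟩, ?_⟩
  rw [hdev]
  simpa [abs_of_pos (by positivity : (0:ℝ) < m + 1)] using hw
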